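/- Let k be an integral domain and let p : X → Y be a quandle covering, i.e. a surjective quandle homomorphism such that z∗x = z∗x′ for all z ∈ X whenever p(x) = p(x′). Suppose X is involutory, i.e. (x∗y)∗y = x for all x, y ∈ X, and suppose the quandle ring k[Y] has only trivial idempotents. Then the set I of idempotents of k[X] is a quandle with respect to the ring multiplication: I is closed under multiplication, u·u = u for all u ∈ I, for each u ∈ I the map v ↦ v·u is a bijection of I, and (u·v)·w = (u·w)·(v·w) for all u,v,w ∈ I. -/
import Mathlib


/-- The quandle ring multiplication on `X →₀ k` determined by
`e_x · e_y = e_{op x y}` extended bilinearly. -/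
noncomputable def qmul {X : Type*} {k : Type*} [CommRing k] (op : X → X → X)
    (f g : X →₀ k) : X →₀ k :=
  f.sum fun x a => g.sum fun y b => Finsupp.single (op x y) (a * b)

lemma qmul_single_single {X : Type*} {k : Type*} [CommRing k] (op : X → X → X)
    (x y : X) (a b : k) :
    qmul op (Finsupp.single x a) (Finsupp.single y b)
      = Finsupp.single (op x y) (a * b) := by
  unfold qmul
  rw [Finsupp.sum_single_index, Finsupp.sum_single_index]
  · simp
  · rw [Finsupp.sum_single_index] <;> simp

/-- Let `p : X → Y` be a quandle covering with `X` involutory, and suppose the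
quandle ring `k[Y]` over an integral domain `k` has only trivial idempotents.
Then the set of idempotents of `k[X]` is a quandle under the ring
multiplication: closed under multiplication, every element idempotent, right
multiplications bijections of it, and right distributive. -/
theorem idempotents_are_quandle_of_involutory_covering {X Y : Type*} {k : Type*}
    [CommRing k] [IsDomain k]
    (opX : X → X → X)
    (hXidem : ∀ x, opX x x = x)
    (hXbij : ∀ y, Function.Bijective (fun x => opX x y))
    (hXdist : ∀ x y z, opX (opX x y) z = opX (opX x z) (opX y z))
    (opY : Y → Y → Y)
    (hYidem : ∀ x, opY x x = x)
    (hYbij : ∀ y, Function.Bijective (fun x => opY x y))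
    (hYdist : ∀ x y z, opY (opY x y) z = opY (opY x z) (opY y z))
    (p : X → Y) (hpsurj : Function.Surjective p)
    (hphom : ∀ x y, p (opX x y) = opY (p x) (p y))
    (hcover : ∀ x x', p x = p x' → ∀ z, opX z x = opX z x')
    (hinv : ∀ x y, opX (opX x y) y = x)
    (htriv : ∀ u : Y →₀ k, u ≠ 0 → qmul opY u u = u →
      ∃ y : Y, u = Finsupp.single y 1) :
    (∀ u ∈ {u : X →₀ k | u ≠ 0 ∧ qmul opX u u = u},
      ∀ v ∈ {u : X →₀ k | u ≠ 0 ∧ qmul opX u u = u},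
      qmul opX u v ∈ {u : X →₀ k | u ≠ 0 ∧ qmul opX u u = u}) ∧
    (∀ u ∈ {u : X →₀ k | u ≠ 0 ∧ qmul opX u u = u}, qmul opX u u = u) ∧
    (∀ u ∈ {u : X →₀ k | u ≠ 0 ∧ qmul opX u u = u},
      Set.BijOn (fun v => qmul opX v u)
        {u : X →₀ k | u ≠ 0 ∧ qmul opX u u = u}
        {u : X →₀ k | u ≠ 0 ∧ qmul opX u u = u}) ∧
    (∀ u ∈ {u : X →₀ k | u ≠ 0 ∧ qmul opX u u = u},
      ∀ v ∈ {u : X →₀ k | u ≠ 0 ∧ qmul opX u u = u},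
      ∀ w ∈ {u : X →₀ k | u ≠ 0 ∧ qmul opX u u = u},
      qmul opX (qmul opX u v) w = qmul opX (qmul opX u w) (qmul opX v w)) := by
  classical
  choose s hs using hpsurj
  set I : Set (X →₀ k) := {u : X →₀ k | u ≠ 0 ∧ qmul opX u u = u} with hIdef
  -- abbreviation for the right translation associated to a point of `Y`
  set T : Y → X → X := fun y z => opX z (s y) with hTdef
  have hTinj : ∀ y, Function.Injective (T y) := fun y => (hXbij (s y)).1
  have hTinv : ∀ y z, T y (T y z) = z := fun y z => hinv z (s y)
  have hTcomp : ∀ y y' z, T (opY y y') (T y' z) = T y' (T y z) := by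
    intro y y' z
    have hpp : p (s (opY y y')) = p (opX (s y) (s y')) := by
      rw [hphom, hs, hs, hs]
    simp only [hTdef]
    rw [hcover _ _ hpp, ← hXdist]
  -- general expansion of `qmul` through the image under `p` of the right factor
  have qmul_eq : ∀ u v : X →₀ k,
      qmul opX u v = (Finsupp.mapDomain p v).sum
        fun yy b => u.sum fun z a => Finsupp.single (opX z (s yy)) (a * b) := by
    intro u v
    rw [Finsupp.sum_mapDomain_index]
    · unfold qmul
      rw [Finsupp.sum_comm]
      refine Finsupp.sum_congr fun x _ => ?_
      refine Finsupp.sum_congr fun z _ => ?_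
      rw [hcover x (s (p x)) (hs (p x)).symm z]
    · intro b; simp
    · intro b m₁ m₂
      simp only [mul_add, Finsupp.single_add]
      rw [Finsupp.sum_add]
  -- `mapDomain p` is multiplicative
  have hmd : ∀ u v : X →₀ k,
      Finsupp.mapDomain p (qmul opX u v)
        = qmul opY (Finsupp.mapDomain p u) (Finsupp.mapDomain p v) := by
    intro u v
    unfold qmul
    rw [Finsupp.mapDomain_sum]
    rw [Finsupp.sum_mapDomain_index (f := p) (s := u)]
    · refine Finsupp.sum_congr fun x _ => ?_
      rw [Finsupp.mapDomain_sum]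
      rw [Finsupp.sum_mapDomain_index (f := p) (s := v)]
      · refine Finsupp.sum_congr fun x' _ => ?_
        rw [Finsupp.mapDomain_single, hphom]
      · intro b; simp
      · intro b m₁ m₂; simp [mul_add, Finsupp.single_add]
    · intro b; simp
    · intro b m₁ m₂
      simp only [add_mul, Finsupp.single_add]
      rw [Finsupp.sum_add]
  -- if the right factor maps to `single y 1`, multiplication is `mapDomain (T y)`
  have hqm : ∀ (u v : X →₀ k) (y : Y), Finsupp.mapDomain p v = Finsupp.single y 1 →
      qmul opX u v = Finsupp.mapDomain (T y) u := by
    intro u v y hv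
    rw [qmul_eq u v, hv, Finsupp.sum_single_index]
    · simp only [mul_one]
      rfl
    · simp
  -- every idempotent has a well-defined basepoint in `Y`
  have hbp : ∀ u ∈ I, ∃ y, Finsupp.mapDomain p u = Finsupp.single y 1 := by
    intro u hu
    obtain ⟨hu0, huid⟩ := hu
    have h1 : Finsupp.mapDomain p u ≠ 0 := by
      intro h0
      apply hu0
      rw [← huid, qmul_eq u u, h0, Finsupp.sum_zero_index]
    have h2 : qmul opY (Finsupp.mapDomain p u) (Finsupp.mapDomain p u)
        = Finsupp.mapDomain p u := by
      rw [← hmd, huid]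
    exact htriv _ h1 h2
  have hmapne : ∀ (y : Y) (u : X →₀ k), u ≠ 0 → Finsupp.mapDomain (T y) u ≠ 0 := by
    intro y u hu h0
    exact hu (Finsupp.mapDomain_injective (hTinj y) (by rw [h0, Finsupp.mapDomain_zero]))
  -- closure under multiplication
  have hclose : ∀ u ∈ I, ∀ v ∈ I, qmul opX u v ∈ I := by
    intro u hu v hv
    obtain ⟨yu, hyu⟩ := hbp u hu
    obtain ⟨yv, hyv⟩ := hbp v hv
    have hw : qmul opX u v = Finsupp.mapDomain (T yv) u := hqm u v yv hyv
    have hwbp : Finsupp.mapDomain p (qmul opX u v) = Finsupp.single (opY yu yv) 1 := by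
      rw [hmd, hyu, hyv, qmul_single_single, one_mul]
    constructor
    · rw [hw]; exact hmapne yv u hu.1
    · rw [hqm _ _ _ hwbp, hw, ← Finsupp.mapDomain_comp]
      have hfun : T (opY yu yv) ∘ T yv = T yv ∘ T yu := funext fun z => hTcomp yu yv z
      rw [hfun, Finsupp.mapDomain_comp]
      have : Finsupp.mapDomain (T yu) u = u := by
        rw [← hqm u u yu hyu]; exact hu.2
      rw [this]
  refine ⟨hclose, fun u hu => hu.2, ?_, ?_⟩
  · -- right multiplications are bijections of I
    intro u hu
    obtain ⟨yu, hyu⟩ := hbp u hu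
    refine ⟨fun v hv => hclose v hv u hu, ?_, ?_⟩
    · intro v₁ h₁ v₂ h₂ hq
      simp only at hq
      rw [hqm v₁ u yu hyu, hqm v₂ u yu hyu] at hq
      exact Finsupp.mapDomain_injective (hTinj yu) hq
    · intro w hw
      refine ⟨qmul opX w u, hclose w hw u hu, ?_⟩
      simp only
      rw [hqm (qmul opX w u) u yu hyu, hqm w u yu hyu, ← Finsupp.mapDomain_comp]
      have hfun : T yu ∘ T yu = id := funext fun z => hTinv yu z
      rw [hfun, Finsupp.mapDomain_id]
  · -- right distributivity
    intro u hu v hv w hw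
    obtain ⟨yv, hyv⟩ := hbp v hv
    obtain ⟨yw, hyw⟩ := hbp w hw
    have hvwbp : Finsupp.mapDomain p (qmul opX v w) = Finsupp.single (opY yv yw) 1 := by
      rw [hmd, hyv, hyw, qmul_single_single, one_mul]
    rw [hqm (qmul opX u v) w yw hyw, hqm u v yv hyv,
        hqm (qmul opX u w) (qmul opX v w) (opY yv yw) hvwbp, hqm u w yw hyw,
        ← Finsupp.mapDomain_comp, ← Finsupp.mapDomain_comp]
    have hfun : T (opY yv yw) ∘ T yw = T yw ∘ T yv := funext fun z => hTcomp yv yw z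
    rw [hfun]
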